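/- arXiv:2405.00610 — 3 statements merged into one kernel-verified Lean document; each statement's English description precedes it below -/
import Mathlib

section
/- The largest entry of the matrix (A(2)B(2))^(n/2) for even n equals (1/2 + 1/(2*sqrt(2)))*(1+sqrt(2))^n + (1/2 - 1/(2*sqrt(2)))*(1-sqrt(2))^n. -/
/-!
`!![5, 2; 2, 1]` is symmetric with eigenvalues `(1 ± √2)²`, so it equals
`(1 + √2)² P₊ + (1 - √2)² P₋` for its two complementary orthogonal eigenprojections `P₊, P₋`.
Hence its `k`-th power is `(1 + √2)^(2k) P₊ + (1 - √2)^(2k) P₋`, whose `(0,0)` entry is the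
stated formula; the entry comparisons reduce to `0 ≤ (1 - √2)^(2k) ≤ (1 + √2)^(2k)`.
-/

open Matrix

theorem pow_smul_add_smul_of_orthogonal_idempotents {R A : Type*} [CommSemiring R] [Semiring A]
    [Algebra R A] {P Q : A} (hP : IsIdempotentElem P) (hQ : IsIdempotentElem Q)
    (hPQ : P * Q = 0) (hQP : Q * P = 0) (hsum : P + Q = 1) (a b : R) (k : ℕ) :
    (a • P + b • Q) ^ k = a ^ k • P + b ^ k • Q := by
  induction k with
  | zero => simpa using hsum.symm
  | succ k ih =>
    simp only [pow_succ, ih, add_mul, mul_add, smul_mul_smul, hP.eq, hQ.eq, hPQ, hQP,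
      smul_zero, add_zero, zero_add]

namespace SilverMatrix

noncomputable section

def invTwoSqrtTwo : ℝ := 1 / (2 * Real.sqrt 2)

def projPos : Matrix (Fin 2) (Fin 2) ℝ :=
  !![1 / 2 + invTwoSqrtTwo, invTwoSqrtTwo; invTwoSqrtTwo, 1 / 2 - invTwoSqrtTwo]

def projNeg : Matrix (Fin 2) (Fin 2) ℝ :=
  !![1 / 2 - invTwoSqrtTwo, -invTwoSqrtTwo; -invTwoSqrtTwo, 1 / 2 + invTwoSqrtTwo]

lemma invTwoSqrtTwo_sq : invTwoSqrtTwo ^ 2 = 1 / 8 := by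
  rw [invTwoSqrtTwo, div_pow, mul_pow, Real.sq_sqrt zero_le_two]; norm_num

lemma invTwoSqrtTwo_nonneg : 0 ≤ invTwoSqrtTwo := by
  rw [invTwoSqrtTwo]; positivity

lemma sqrt_two_mul_invTwoSqrtTwo : Real.sqrt 2 * invTwoSqrtTwo = 1 / 2 := by
  rw [invTwoSqrtTwo]; field_simp

lemma isIdempotentElem_projPos : IsIdempotentElem projPos := by
  rw [IsIdempotentElem, projPos, mul_fin_two]
  ext i j; fin_cases i <;> fin_cases j <;> simp <;> linarith [invTwoSqrtTwo_sq]

lemma isIdempotentElem_projNeg : IsIdempotentElem projNeg := by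
  rw [IsIdempotentElem, projNeg, mul_fin_two]
  ext i j; fin_cases i <;> fin_cases j <;> simp <;> linarith [invTwoSqrtTwo_sq]

lemma projPos_mul_projNeg : projPos * projNeg = 0 := by
  rw [projPos, projNeg, mul_fin_two]
  ext i j; fin_cases i <;> fin_cases j <;> simp <;> linarith [invTwoSqrtTwo_sq]

lemma projNeg_mul_projPos : projNeg * projPos = 0 := by
  rw [projPos, projNeg, mul_fin_two]
  ext i j; fin_cases i <;> fin_cases j <;> simp <;> linarith [invTwoSqrtTwo_sq]

lemma projPos_add_projNeg : projPos + projNeg = 1 := by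
  rw [projPos, projNeg, one_fin_two]
  ext i j; fin_cases i <;> fin_cases j <;> simp <;> ring

lemma eq_smul_projPos_add_smul_projNeg :
    !![5, 2; 2, 1] = (1 + Real.sqrt 2) ^ 2 • projPos + (1 - Real.sqrt 2) ^ 2 • projNeg := by
  have hs := Real.sq_sqrt (zero_le_two (α := ℝ))
  rw [projPos, projNeg]
  ext i j; fin_cases i <;> fin_cases j <;> simp
  all_goals linarith [sqrt_two_mul_invTwoSqrtTwo]

lemma pow_eq_smul_projPos_add_smul_projNeg (k : ℕ) :
    (!![5, 2; 2, 1] : Matrix (Fin 2) (Fin 2) ℝ) ^ k =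
    ((1 + Real.sqrt 2) ^ 2) ^ k • projPos + ((1 - Real.sqrt 2) ^ 2) ^ k • projNeg := by
  rw [eq_smul_projPos_add_smul_projNeg, pow_smul_add_smul_of_orthogonal_idempotents
    isIdempotentElem_projPos isIdempotentElem_projNeg projPos_mul_projNeg projNeg_mul_projPos
    projPos_add_projNeg]

lemma smul_projPos_add_smul_projNeg_apply_le {a b : ℝ} (hb : 0 ≤ b) (hba : b ≤ a)
    (i j : Fin 2) :
    (a • projPos + b • projNeg) i j ≤ (a • projPos + b • projNeg) 0 0 := by
  have := invTwoSqrtTwo_nonneg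
  fin_cases i <;> fin_cases j <;> simp [projPos, projNeg] <;> nlinarith

end

end SilverMatrix

open SilverMatrix in
/-- For even `n`, the `(0,0)` entry of `(A(2)B(2))^(n/2)` is the largest entry of that
matrix and equals `(1/2 + 1/(2√2))(1+√2)^n + (1/2 - 1/(2√2))(1-√2)^n`. -/
theorem stmt_2 (n : ℕ) (hn : Even n) (M : Matrix (Fin 2) (Fin 2) ℝ)
    (hM : M = !![5, 2; 2, 1]) :
    (∀ i j : Fin 2, (M ^ (n / 2)) i j ≤ (M ^ (n / 2)) 0 0) ∧
    (M ^ (n / 2)) 0 0 =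
      (1 / 2 + 1 / (2 * Real.sqrt 2)) * (1 + Real.sqrt 2) ^ n
        + (1 / 2 - 1 / (2 * Real.sqrt 2)) * (1 - Real.sqrt 2) ^ n := by
  have hpow :
      M ^ (n / 2) = (1 + Real.sqrt 2) ^ n • projPos + (1 - Real.sqrt 2) ^ n • projNeg := by
    rw [hM, pow_eq_smul_projPos_add_smul_projNeg, ← pow_mul, ← pow_mul,
      Nat.two_mul_div_two_of_even hn]
  have hsqrt := Real.sqrt_nonneg 2
  have hle : (1 - Real.sqrt 2) ^ n ≤ (1 + Real.sqrt 2) ^ n := by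
    rw [← hn.pow_abs]
    exact pow_le_pow_left₀ (abs_nonneg _) (abs_le.mpr ⟨by linarith, by linarith⟩) n
  rw [hpow]
  refine ⟨smul_projPos_add_smul_projNeg_apply_le (hn.pow_nonneg _) hle, ?_⟩
  simp [projPos, projNeg, invTwoSqrtTwo]
  ring
end

section
/- Let k, m ≥ 2 be real numbers and let M = [[x,y],[z,t]] be a 2x2 real matrix with strictly positive entries satisfying y ≥ kx and t ≥ kz. Then every entry of M·B(m)·A(k) is greater than or equal to the corresponding entry (after a suitable column permutation) of each of M·A(k)·A(k), M·B(m)·B(m), and M·A(k)·B(m); in particular the maximum entry of M·B(m)·A(k) is at least the maximum entry of each of the other three products. -/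
/-- For `k, m ≥ 2` and `M = [[x,y],[z,t]]` with strictly positive entries satisfying
`y ≥ kx` and `t ≥ kz`, every entry of `M·B(m)·A(k)` dominates the corresponding entry
(after a suitable column permutation) of `M·A(k)·A(k)`, `M·B(m)·B(m)` and `M·A(k)·B(m)`;
in particular the maximum entry of `M·B(m)·A(k)` is at least the maximum entry of each
of the other three products. -/
theorem stmt_3 (k m x y z t : ℝ) (hk : 2 ≤ k) (hm : 2 ≤ m)
    (hx : 0 < x) (hy : 0 < y) (hz : 0 < z) (ht : 0 < t)
    (hyx : k * x ≤ y) (htz : k * z ≤ t) :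
    -- versus M·A(k)·A(k) = [[x, y+2kx],[z, t+2kz]] (identity permutation of columns)
    (x ≤ x + m * y ∧ y + 2 * k * x ≤ k * x + (k * m + 1) * y ∧
     z ≤ z + m * t ∧ t + 2 * k * z ≤ k * z + (k * m + 1) * t) ∧
    -- versus M·B(m)·B(m) = [[x+2my, y],[z+2mt, t]] (columns swapped)
    (x + 2 * m * y ≤ k * x + (k * m + 1) * y ∧ y ≤ x + m * y ∧
     z + 2 * m * t ≤ k * z + (k * m + 1) * t ∧ t ≤ z + m * t) ∧
    -- versus M·A(k)·B(m) = [[(km+1)x+my, y+kx],[(km+1)z+mt, kz+t]] (columns swapped)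
    ((k * m + 1) * x + m * y ≤ k * x + (k * m + 1) * y ∧ y + k * x ≤ x + m * y ∧
     (k * m + 1) * z + m * t ≤ k * z + (k * m + 1) * t ∧ k * z + t ≤ z + m * t) ∧
    -- the maximum entry of M·B(m)·A(k) dominates the maximum entry of each other product
    (max (max x (y + 2 * k * x)) (max z (t + 2 * k * z)) ≤
        max (max (x + m * y) (k * x + (k * m + 1) * y))
            (max (z + m * t) (k * z + (k * m + 1) * t)) ∧
     max (max (x + 2 * m * y) y) (max (z + 2 * m * t) t) ≤
        max (max (x + m * y) (k * x + (k * m + 1) * y))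
            (max (z + m * t) (k * z + (k * m + 1) * t)) ∧
     max (max ((k * m + 1) * x + m * y) (y + k * x))
         (max ((k * m + 1) * z + m * t) (k * z + t)) ≤
        max (max (x + m * y) (k * x + (k * m + 1) * y))
            (max (z + m * t) (k * z + (k * m + 1) * t))) := by

  have h1 : x ≤ x + m * y := by nlinarith
  have h2 : y + 2 * k * x ≤ k * x + (k * m + 1) * y := by nlinarith
  have h3 : z ≤ z + m * t := by nlinarith
  have h4 : t + 2 * k * z ≤ k * z + (k * m + 1) * t := by nlinarith
  have h5 : x + 2 * m * y ≤ k * x + (k * m + 1) * y := by nlinarith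
  have h6 : y ≤ x + m * y := by nlinarith
  have h7 : z + 2 * m * t ≤ k * z + (k * m + 1) * t := by nlinarith
  have h8 : t ≤ z + m * t := by nlinarith
  have h9 : (k * m + 1) * x + m * y ≤ k * x + (k * m + 1) * y := by nlinarith
  have h10 : y + k * x ≤ x + m * y := by nlinarith
  have h11 : (k * m + 1) * z + m * t ≤ k * z + (k * m + 1) * t := by nlinarith
  have h12 : k * z + t ≤ z + m * t := by nlinarith
  refine ⟨⟨h1, h2, h3, h4⟩, ⟨h5, h6, h7, h8⟩, ⟨h9, h10, h11, h12⟩, ?_, ?_, ?_⟩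
  · exact max_le (max_le (le_max_of_le_left (le_max_of_le_left h1))
      (le_max_of_le_left (le_max_of_le_right h2)))
      (max_le (le_max_of_le_right (le_max_of_le_left h3))
      (le_max_of_le_right (le_max_of_le_right h4)))
  · exact max_le (max_le (le_max_of_le_left (le_max_of_le_right h5))
      (le_max_of_le_left (le_max_of_le_left h6)))
      (max_le (le_max_of_le_right (le_max_of_le_right h7))
      (le_max_of_le_right (le_max_of_le_left h8)))
  · exact max_le (max_le (le_max_of_le_left (le_max_of_le_right h9))
      (le_max_of_le_left (le_max_of_le_left h10)))
      (max_le (le_max_of_le_right (le_max_of_le_right h11))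
      (le_max_of_le_right (le_max_of_le_left h12)))
end

section
/- The matrices A = [[2,1],[1,1]] and B = [[3,1],[2,1]] generate a free semigroup: if two (positive) words in A and B are equal as matrices, then they are equal as words. -/
private def Am : Matrix (Fin 2) (Fin 2) ℤ := !![2, 1; 1, 1]
private def Bm : Matrix (Fin 2) (Fin 2) ℤ := !![3, 1; 2, 1]

private def fw (w : List Bool) : Matrix (Fin 2) (Fin 2) ℤ :=
  (w.map (fun c => if c then Am else Bm)).prod

private def Dom (M : Matrix (Fin 2) (Fin 2) ℤ) : Prop :=
  0 < M 0 0 ∧ 0 < M 0 1 ∧ 0 < M 1 0 ∧ 0 < M 1 1 ∧ M 1 0 < M 0 0 ∧ M 1 1 ≤ M 0 1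

private lemma Inv_mul {M N : Matrix (Fin 2) (Fin 2) ℤ} (hM : Dom M) (hN : Dom N) :
    Dom (M * N) := by
  obtain ⟨a1, a2, a3, a4, a5, a6⟩ := hM
  obtain ⟨b1, b2, b3, b4, b5, b6⟩ := hN
  refine ⟨?_, ?_, ?_, ?_, ?_, ?_⟩ <;>
    simp only [Matrix.mul_apply, Fin.sum_univ_two] <;> nlinarith

private lemma Inv_A : Dom Am := by
  refine ⟨?_, ?_, ?_, ?_, ?_, ?_⟩ <;> norm_num [Am]

private lemma Inv_B : Dom Bm := by
  refine ⟨?_, ?_, ?_, ?_, ?_, ?_⟩ <;> norm_num [Bm]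

private lemma fw_cons (c : Bool) (w : List Bool) :
    fw (c :: w) = (if c then Am else Bm) * fw w := by
  simp [fw]

private lemma Inv_fw : ∀ (w : List Bool) (c : Bool), Dom (fw (c :: w)) := by
  intro w
  induction w with
  | nil =>
    intro c
    cases c <;> simp [fw_cons, fw] <;> [exact Inv_B; exact Inv_A]
  | cons d t ih =>
    intro c
    rw [fw_cons]
    cases c
    · exact Inv_mul Inv_B (ih d)
    · exact Inv_mul Inv_A (ih d)

private lemma decode_true (w : List Bool) :
    3 * (fw (true :: w)) 1 0 < 2 * (fw (true :: w)) 0 0 := by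
  rw [fw_cons]
  cases w with
  | nil => norm_num [fw, Am]
  | cons d t =>
    obtain ⟨a1, a2, a3, a4, a5, a6⟩ := Inv_fw t d
    simp only [if_true, Matrix.mul_apply, Fin.sum_univ_two, Am]
    norm_num [Matrix.cons_val_zero, Matrix.cons_val_one]
    nlinarith

private lemma decode_false (w : List Bool) :
    2 * (fw (false :: w)) 0 0 ≤ 3 * (fw (false :: w)) 1 0 := by
  rw [fw_cons]
  cases w with
  | nil => norm_num [fw, Bm]
  | cons d t =>
    obtain ⟨a1, a2, a3, a4, a5, a6⟩ := Inv_fw t d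
    simp only [if_false, Matrix.mul_apply, Fin.sum_univ_two, Bm]
    norm_num [Matrix.cons_val_zero, Matrix.cons_val_one]
    nlinarith

private lemma cancel_A {M N : Matrix (Fin 2) (Fin 2) ℤ} (h : Am * M = Am * N) : M = N := by
  have hc : (!![1, -1; -1, 2] : Matrix (Fin 2) (Fin 2) ℤ) * Am = 1 := by
    rw [Matrix.one_fin_two]; norm_num [Am, Matrix.mul_fin_two]
  calc M = (!![1, -1; -1, 2] * Am) * M := by rw [hc, one_mul]
    _ = !![1, -1; -1, 2] * (Am * M) := by rw [Matrix.mul_assoc]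
    _ = !![1, -1; -1, 2] * (Am * N) := by rw [h]
    _ = (!![1, -1; -1, 2] * Am) * N := by rw [Matrix.mul_assoc]
    _ = N := by rw [hc, one_mul]

private lemma cancel_B {M N : Matrix (Fin 2) (Fin 2) ℤ} (h : Bm * M = Bm * N) : M = N := by
  have hc : (!![1, -1; -2, 3] : Matrix (Fin 2) (Fin 2) ℤ) * Bm = 1 := by
    rw [Matrix.one_fin_two]; norm_num [Bm, Matrix.mul_fin_two]
  calc M = (!![1, -1; -2, 3] * Bm) * M := by rw [hc, one_mul]
    _ = !![1, -1; -2, 3] * (Bm * M) := by rw [Matrix.mul_assoc]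
    _ = !![1, -1; -2, 3] * (Bm * N) := by rw [h]
    _ = (!![1, -1; -2, 3] * Bm) * N := by rw [Matrix.mul_assoc]
    _ = N := by rw [hc, one_mul]

private lemma fw_inj : ∀ (w v : List Bool), fw w = fw v → w = v := by
  intro w
  induction w with
  | nil =>
    intro v h
    cases v with
    | nil => rfl
    | cons c t =>
      exfalso
      have hI := (Inv_fw t c).2.2.1
      rw [← h] at hI
      have h0 : (fw []) 1 0 = 0 := by
        simp [fw, Matrix.one_apply]
      omega
  | cons c s ih =>
    intro v h
    cases v with
    | nil =>
      exfalso
      have hI := (Inv_fw s c).2.2.1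
      rw [h] at hI
      have h0 : (fw []) 1 0 = 0 := by
        simp [fw, Matrix.one_apply]
      omega
    | cons d t =>
      have hcd : c = d := by
        cases c <;> cases d
        · rfl
        · exfalso
          have h1 := decode_false (w := s)
          have h2 := decode_true (w := t)
          rw [h] at h1
          omega
        · exfalso
          have h1 := decode_true (w := s)
          have h2 := decode_false (w := t)
          rw [h] at h1
          omega
        · rfl
      subst hcd
      have hst : s = t := by
        rw [fw_cons, fw_cons] at h
        cases c
        · exact ih t (cancel_B (by simpa using h))
        · exact ih t (cancel_A (by simpa using h))
      rw [hst]

/-- The matrices `A = [[2,1],[1,1]]` and `B = [[3,1],[2,1]]` generate a free semigroup: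
if two positive words in `A` and `B` are equal as matrices, then they are equal as words. -/
theorem stmt_16 (A B : Matrix (Fin 2) (Fin 2) ℤ)
    (hA : A = !![2, 1; 1, 1]) (hB : B = !![3, 1; 2, 1]) :
    Function.Injective
      (fun w : List Bool => (w.map (fun c => if c then A else B)).prod) := by
  subst hA hB
  intro w v h
  exact fw_inj w v h
end
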